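/- Suppose (u_h, v_h, q_h) solves the dissipative semi-discrete LDG Scheme D1 on [0,T]. Then for every t ∈ [0,T]: (d/dt) ∫_a^b u_h(t,x) dx = 0 (conservation of mass E₀) and (d/dt) ∫_a^b u_h(t,x)² dx ≤ 0 (dissipation of energy E₂). -/

import Mathlib

open Polynomial Set

noncomputable section

namespace FW

variable {N : ℕ}

/-- Minus trace `ω⁻` at interface `j+1/2` (right end of cell `j`). -/
def trM (x : Fin (N + 1) → ℝ) (ω : Fin N → Polynomial ℝ) (j : Fin N) : ℝ :=
  (ω j).eval (x j.succ)

/-- Plus trace `ω⁺` at interface `j+1/2` (left end of the next cell, cyclically). -/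
def trP [NeZero N] (x : Fin (N + 1) → ℝ) (ω : Fin N → Polynomial ℝ) (j : Fin N) : ℝ :=
  (ω (j + 1)).eval (x (j + 1).castSucc)

/-- Average trace `{ω}`. -/
def trA [NeZero N] (x : Fin (N + 1) → ℝ) (ω : Fin N → Polynomial ℝ) (j : Fin N) : ℝ :=
  (trP x ω j + trM x ω j) / 2

/-- Jump `[ω]`. -/
def jmp [NeZero N] (x : Fin (N + 1) → ℝ) (ω : Fin N → Polynomial ℝ) (j : Fin N) : ℝ :=
  trP x ω j - trM x ω j

/-- Cell L² pairing `(u, φ)_{I_j}` of a piecewise polynomial with a test polynomial. -/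
def ipj (x : Fin (N + 1) → ℝ) (u : Fin N → Polynomial ℝ) (j : Fin N) (φ : Polynomial ℝ) : ℝ :=
  ∫ t in (x j.castSucc)..(x j.succ), (u j).eval t * φ.eval t

/-- Cell pairing `(f∘u, φ)_{I_j}`. -/
def ipfj (x : Fin (N + 1) → ℝ) (f : ℝ → ℝ) (u : Fin N → Polynomial ℝ) (j : Fin N)
    (φ : Polynomial ℝ) : ℝ :=
  ∫ t in (x j.castSucc)..(x j.succ), f ((u j).eval t) * φ.eval t

/-- Boundary pairing `⟨g, φ⟩_{I_j}` for interface values `g`. -/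
def bdj [NeZero N] (x : Fin (N + 1) → ℝ) (g : Fin N → ℝ) (j : Fin N) (φ : Polynomial ℝ) : ℝ :=
  g j * φ.eval (x j.succ) - g (j - 1) * φ.eval (x j.castSucc)

/-- Membership in the space `V_h^k` of piecewise polynomials of degree at most `k`. -/
def memV (k : ℕ) (ω : Fin N → Polynomial ℝ) : Prop :=
  ∀ j, (ω j).degree ≤ (k : WithBot ℕ)

/-- `L⁻(ω, φ)`. -/
def Lm [NeZero N] (x : Fin (N + 1) → ℝ) (ω φ : Fin N → Polynomial ℝ) : ℝ :=
  ∑ j, (-(ipj x ω j (derivative (φ j))) + bdj x (trM x ω) j (φ j))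

/-- `L⁺(ω, φ)`. -/
def Lp [NeZero N] (x : Fin (N + 1) → ℝ) (ω φ : Fin N → Polynomial ℝ) : ℝ :=
  ∑ j, (-(ipj x ω j (derivative (φ j))) + bdj x (trP x ω) j (φ j))

/-- `L^c(ω, φ)`. -/
def Lc [NeZero N] (x : Fin (N + 1) → ℝ) (ω φ : Fin N → Polynomial ℝ) : ℝ :=
  ∑ j, (-(ipj x ω j (derivative (φ j))) + bdj x (trA x ω) j (φ j))

/-- Godunov numerical flux. -/
def godunov (f : ℝ → ℝ) (c d : ℝ) : ℝ :=
  if c < d then sInf (f '' Set.Icc c d) else sSup (f '' Set.Icc d c)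

/-- Conservative numerical flux for `f(u) = u^p/p`, `F(u) = u^(p+1)/(p(p+1))`. -/
def consFlux (p : ℕ) (c d : ℝ) : ℝ :=
  if c = d then c ^ p / (p : ℝ)
  else (d ^ (p + 1) / ((p : ℝ) * ((p : ℝ) + 1)) - c ^ (p + 1) / ((p : ℝ) * ((p : ℝ) + 1))) / (d - c)

/-- Dissipative (Godunov-flux) nonlinear form `N^d`. -/
def Nd [NeZero N] (x : Fin (N + 1) → ℝ) (f : ℝ → ℝ) (ω φ : Fin N → Polynomial ℝ) : ℝ :=
  ∑ j, (-(ipfj x f ω j (derivative (φ j)))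
    + bdj x (fun i => godunov f (trM x ω i) (trP x ω i)) j (φ j))

/-- Conservative-flux nonlinear form `N^c`. -/
def Nc [NeZero N] (x : Fin (N + 1) → ℝ) (p : ℕ) (ω φ : Fin N → Polynomial ℝ) : ℝ :=
  ∑ j, (-(ipfj x (fun w => w ^ p / (p : ℝ)) ω j (derivative (φ j)))
    + bdj x (fun i => consFlux p (trM x ω i) (trP x ω i)) j (φ j))

end FW

/-!
Mass: with φ = 1 the volume terms vanish and each boundary sum telescopes around the periodic mesh.

Energy: with φ = u, Σ (∂ₜu, u) = -N^d(u, u) - Σ (v, u), and both terms are nonnegative.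
Since ∫_{I_j} f(u) u' is the integral of f between the traces of u, N^d(u, u) is a sum over
interfaces of ∫_{u⁺}^{u⁻} f - f̂(u⁻, u⁺)(u⁻ - u⁺), which is ≥ 0 because f̂ is the minimum
(resp. maximum) of f between the traces. For the auxiliary variables, integration by parts gives
L⁻(w, φ) = -L⁺(φ, w), L⁺(w, φ) - L⁻(w, φ) = -Σ [w][φ] and L⁻(w, w) = Σ [w]²/2, so (ii) tested
with u and q and (iii) tested with v yield Σ (v, u) = Σ ([v]² + ([u] + [q])²)/2.
-/

open Finset

namespace Polynomial

lemma intervalIntegral_eval_eq_sum_range {P : ℝ[X]} {n : ℕ} (hP : P.natDegree ≤ n)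
    (c d : ℝ) :
    ∫ y in c..d, P.eval y = ∑ m ∈ range (n + 1), P.coeff m * ∫ y in c..d, y ^ m := by
  simp_rw [eval_eq_sum_range' (Nat.lt_add_one_of_le hP)]
  rw [intervalIntegral.integral_finsetSum (f := fun m y => P.coeff m * y ^ m) fun m _ =>
    (continuous_const.mul (continuous_pow m)).intervalIntegrable c d]
  simp only [intervalIntegral.integral_const_mul]

variable {P : ℝ → ℝ[X]} {P' : ℝ[X]} {s : Set ℝ} {t : ℝ}

lemma hasDerivWithinAt_intervalIntegral_eval {n : ℕ} (hP : ∀ σ ∈ s, (P σ).natDegree ≤ n)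
    (hP' : P'.natDegree ≤ n)
    (hder : ∀ m, HasDerivWithinAt (fun σ => (P σ).coeff m) (P'.coeff m) s t)
    (ht : t ∈ s) (c d : ℝ) :
    HasDerivWithinAt (fun σ => ∫ y in c..d, (P σ).eval y) (∫ y in c..d, P'.eval y) s t := by
  rw [intervalIntegral_eval_eq_sum_range hP']
  exact (HasDerivWithinAt.fun_sum fun m _ => (hder m).mul_const _).congr_of_mem
    (fun σ hσ => intervalIntegral_eval_eq_sum_range (hP σ hσ) c d) ht

lemma hasDerivWithinAt_coeff_mul {Q : ℝ → ℝ[X]} {Q' : ℝ[X]}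
    (hP : ∀ m, HasDerivWithinAt (fun σ => (P σ).coeff m) (P'.coeff m) s t)
    (hQ : ∀ m, HasDerivWithinAt (fun σ => (Q σ).coeff m) (Q'.coeff m) s t) (m : ℕ) :
    HasDerivWithinAt (fun σ => (P σ * Q σ).coeff m) ((P' * Q t + P t * Q').coeff m) s t := by
  simp only [coeff_add, coeff_mul, ← sum_add_distrib]
  exact HasDerivWithinAt.fun_sum fun i _ => (hP i.1).mul (hQ i.2)

lemma hasDerivWithinAt_intervalIntegral_eval_sq {n : ℕ}
    (hP : ∀ σ ∈ s, (P σ).natDegree ≤ n)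
    (hP' : P'.natDegree ≤ n)
    (hder : ∀ m, HasDerivWithinAt (fun σ => (P σ).coeff m) (P'.coeff m) s t)
    (ht : t ∈ s) (c d : ℝ) :
    HasDerivWithinAt (fun σ => ∫ y in c..d, (P σ).eval y ^ 2)
      (2 * ∫ y in c..d, P'.eval y * (P t).eval y) s t := by
  have hsq : ∀ σ ∈ s, (P σ * P σ).natDegree ≤ n + n := fun σ hσ =>
    natDegree_mul_le.trans (add_le_add (hP σ hσ) (hP σ hσ))
  have hsq' : (P' * P t + P t * P').natDegree ≤ n + n :=
    natDegree_add_le_of_degree_le (natDegree_mul_le.trans (add_le_add hP' (hP t ht)))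
      (natDegree_mul_le.trans (add_le_add (hP t ht) hP'))
  have h := hasDerivWithinAt_intervalIntegral_eval hsq hsq'
    (hasDerivWithinAt_coeff_mul hder hder) ht c d
  simp only [eval_add, eval_mul] at h
  convert h using 1
  · simp only [sq]
  · rw [← intervalIntegral.integral_const_mul]
    exact intervalIntegral.integral_congr fun y _ => by ring

end Polynomial

namespace FW

lemma godunov_mul_sub_le_integral {f : ℝ → ℝ} (hf : Continuous f) (c d : ℝ) :
    godunov f c d * (d - c) ≤ ∫ w in c..d, f w := by
  rw [godunov]
  split_ifs with hcd
  · have hbdd : BddBelow (f '' Set.Icc c d) := (isCompact_Icc.image hf).bddBelow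
    have hmono := intervalIntegral.integral_mono_on (μ := MeasureTheory.volume) hcd.le
      intervalIntegrable_const (hf.intervalIntegrable c d)
      fun w hw => csInf_le hbdd ⟨w, hw, rfl⟩
    simpa [mul_comm] using hmono
  · have hbdd : BddAbove (f '' Set.Icc d c) := (isCompact_Icc.image hf).bddAbove
    have hmono := intervalIntegral.integral_mono_on (μ := MeasureTheory.volume)
      (not_lt.mp hcd) (hf.intervalIntegrable d c) intervalIntegrable_const
      fun w hw => le_csSup hbdd ⟨w, hw, rfl⟩
    rw [intervalIntegral.integral_symm]
    simp only [intervalIntegral.integral_const, smul_eq_mul] at hmono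
    linarith

section Forms

variable {N : ℕ} [NeZero N] (x : Fin (N + 1) → ℝ)

lemma sum_comp_sub_one (h : Fin N → ℝ) : ∑ j, h (j - 1) = ∑ j, h j :=
  (Equiv.subRight 1).sum_comp h

lemma trP_sub_one (ω : Fin N → ℝ[X]) (j : Fin N) :
    trP x ω (j - 1) = (ω j).eval (x j.castSucc) := by
  rw [trP, sub_add_cancel]

lemma sum_bdj (g : Fin N → ℝ) (φ : Fin N → ℝ[X]) :
    ∑ j, bdj x g j (φ j) = -∑ j, g j * jmp x φ j := by
  simp only [bdj, sum_sub_distrib, ← trP_sub_one]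
  rw [sum_comp_sub_one (fun j => g j * trP x φ j), ← sum_sub_distrib, ← sum_neg_distrib]
  exact sum_congr rfl fun j _ => by rw [jmp, trM]; ring

omit [NeZero N] in
lemma ipj_comm (ω φ : Fin N → ℝ[X]) (j : Fin N) : ipj x ω j (φ j) = ipj x φ j (ω j) :=
  intervalIntegral.integral_congr fun _ _ => mul_comm _ _

lemma ipj_derivative_add (ω φ : Fin N → ℝ[X]) (j : Fin N) :
    ipj x ω j (derivative (φ j)) + ipj x φ j (derivative (ω j))
      = trM x ω j * trM x φ j - trP x ω (j - 1) * trP x φ (j - 1) := by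
  have ibp := intervalIntegral.integral_mul_deriv_eq_deriv_mul
    (a := x j.castSucc) (b := x j.succ) (fun y _ => (ω j).hasDerivAt y)
    (fun y _ => (φ j).hasDerivAt y) ((ω j).derivative.continuous.intervalIntegrable _ _)
    ((φ j).derivative.continuous.intervalIntegrable _ _)
  rw [trP_sub_one, trP_sub_one, ipj, ipj, ibp, trM, trM]
  simp only [mul_comm ((φ j).eval _)]
  ring

lemma sum_ipj_derivative_add (ω φ : Fin N → ℝ[X]) :
    ∑ j, ipj x ω j (derivative (φ j)) + ∑ j, ipj x φ j (derivative (ω j))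
      = ∑ j, (trM x ω j * trM x φ j - trP x ω j * trP x φ j) := by
  simp only [← sum_add_distrib, ipj_derivative_add, sum_sub_distrib,
    sum_comp_sub_one (fun j => trP x ω j * trP x φ j)]

lemma Lm_eq (ω φ : Fin N → ℝ[X]) :
    Lm x ω φ = -(∑ j, ipj x ω j (derivative (φ j)) + ∑ j, trM x ω j * jmp x φ j) := by
  simp only [Lm, sum_add_distrib, sum_neg_distrib, sum_bdj, neg_add]

lemma Lp_eq (ω φ : Fin N → ℝ[X]) :
    Lp x ω φ = -(∑ j, ipj x ω j (derivative (φ j)) + ∑ j, trP x ω j * jmp x φ j) := by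
  simp only [Lp, sum_add_distrib, sum_neg_distrib, sum_bdj, neg_add]

lemma Lm_add_Lp_swap (ω φ : Fin N → ℝ[X]) : Lm x ω φ + Lp x φ ω = 0 := by
  have traces : ∑ j, trM x ω j * jmp x φ j + ∑ j, trP x φ j * jmp x ω j
      = -∑ j, (trM x ω j * trM x φ j - trP x ω j * trP x φ j) := by
    rw [← sum_add_distrib, ← sum_neg_distrib]
    exact sum_congr rfl fun j _ => by simp only [jmp]; ring
  rw [Lm_eq, Lp_eq]
  linarith [sum_ipj_derivative_add x ω φ]

lemma Lp_sub_Lm (ω φ : Fin N → ℝ[X]) :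
    Lp x ω φ - Lm x ω φ = -∑ j, jmp x ω j * jmp x φ j := by
  have traces : ∑ j, trM x ω j * jmp x φ j - ∑ j, trP x ω j * jmp x φ j
      = -∑ j, jmp x ω j * jmp x φ j := by
    rw [← sum_sub_distrib, ← sum_neg_distrib]
    exact sum_congr rfl fun j _ => by simp only [jmp]; ring
  rw [Lm_eq, Lp_eq]
  linarith

lemma Lm_self (ω : Fin N → ℝ[X]) : Lm x ω ω = ∑ j, jmp x ω j ^ 2 / 2 := by
  have traces : ∑ j, jmp x ω j ^ 2 / 2 + ∑ j, trM x ω j * jmp x ω j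
      = -(∑ j, (trM x ω j * trM x ω j - trP x ω j * trP x ω j)) / 2 := by
    rw [← sum_add_distrib, ← sum_neg_distrib, sum_div]
    exact sum_congr rfl fun j _ => by simp only [jmp]; ring
  rw [Lm_eq]
  linarith [sum_ipj_derivative_add x ω ω]

lemma Lm_one (ω : Fin N → ℝ[X]) : Lm x ω (fun _ => 1) = 0 := by
  simp [Lm_eq, jmp, trM, trP, ipj]

lemma sum_ipj_nonneg_of_ldg {k : ℕ} {U V Q : Fin N → ℝ[X]}
    (hU : memV k U) (hV : memV k V) (hQ : memV k Q)
    (hVeq : ∀ φ, memV k φ → ∑ j, ipj x V j (φ j) = Lm x Q φ + Lm x U φ)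
    (hQeq : ∀ φ, memV k φ → ∑ j, ipj x Q j (φ j) = Lp x V φ) :
    0 ≤ ∑ j, ipj x V j (U j) := by
  have hVQ : ∑ j, ipj x V j (Q j) = ∑ j, ipj x Q j (V j) :=
    sum_congr rfl fun j _ => ipj_comm x V Q j
  rw [hVeq Q hQ, hQeq V hV] at hVQ
  have hQU := Lm_add_Lp_swap x Q U
  have hVV := Lm_add_Lp_swap x V V
  have hUQ := Lp_sub_Lm x U Q
  have key : ∑ j, ipj x V j (U j)
      = ∑ j, (jmp x V j ^ 2 / 2 + (jmp x U j + jmp x Q j) ^ 2 / 2) := by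
    have expand : ∑ j, (jmp x V j ^ 2 / 2 + (jmp x U j + jmp x Q j) ^ 2 / 2)
        = Lm x V V + Lm x U U + Lm x Q Q + ∑ j, jmp x U j * jmp x Q j := by
      simp only [Lm_self, ← sum_add_distrib]
      exact sum_congr rfl fun j _ => by ring
    rw [expand, hVeq U hU]
    linarith
  rw [key]
  positivity

lemma ipfj_derivative_self {f : ℝ → ℝ} (hf : Continuous f) (ω : Fin N → ℝ[X])
    (j : Fin N) :
    ipfj x f ω j (derivative (ω j)) = ∫ w in trP x ω (j - 1)..trM x ω j, f w := by
  rw [trP_sub_one, trM, ipfj, ← intervalIntegral.integral_comp_mul_deriv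
    (fun y _ => (ω j).hasDerivAt y) (ω j).derivative.continuous.continuousOn hf]
  rfl

lemma Nd_self_nonneg {f : ℝ → ℝ} (hf : Continuous f) (ω : Fin N → ℝ[X]) :
    0 ≤ Nd x f ω ω := by
  have hint : ∀ c d, IntervalIntegrable f MeasureTheory.volume c d := hf.intervalIntegrable
  have cells : ∑ j, ipfj x f ω j (derivative (ω j))
      = ∑ j, ∫ w in trP x ω j..trM x ω j, f w := by
    have split : ∀ c d, ∫ w in c..d, f w = (∫ w in c..0, f w) + ∫ w in (0 : ℝ)..d, f w :=
      fun c d => (intervalIntegral.integral_add_adjacent_intervals (hint c 0) (hint 0 d)).symm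
    calc ∑ j, ipfj x f ω j (derivative (ω j))
        = ∑ j, ((∫ w in trP x ω (j - 1)..0, f w) + ∫ w in (0 : ℝ)..trM x ω j, f w) :=
          sum_congr rfl fun j _ => by rw [ipfj_derivative_self x hf, split]
      _ = ∑ j, ((∫ w in trP x ω j..0, f w) + ∫ w in (0 : ℝ)..trM x ω j, f w) := by
          rw [sum_add_distrib, sum_add_distrib,
            sum_comp_sub_one (fun j => ∫ w in trP x ω j..0, f w)]
      _ = ∑ j, ∫ w in trP x ω j..trM x ω j, f w := sum_congr rfl fun j _ => (split _ _).symm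
  have flux : ∀ j, ∫ w in trP x ω j..trM x ω j, f w
      ≤ -(godunov f (trM x ω j) (trP x ω j) * jmp x ω j) := by
    intro j
    have := godunov_mul_sub_le_integral hf (trM x ω j) (trP x ω j)
    rw [intervalIntegral.integral_symm, jmp]
    linarith
  have total := sum_le_sum fun j (_ : j ∈ Finset.univ) => flux j
  rw [sum_neg_distrib] at total
  rw [Nd, sum_add_distrib, sum_neg_distrib, sum_bdj, cells]
  linarith

lemma Nd_one (f : ℝ → ℝ) (ω : Fin N → ℝ[X]) : Nd x f ω (fun _ => 1) = 0 := by
  simp [Nd, sum_bdj, jmp, trP, trM, ipfj]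

lemma sum_ipj_eq_Lm_add_Lm {k : ℕ} {U V Q φ : Fin N → ℝ[X]}
    (h : ∀ j, ∀ ψ : ℝ[X], ψ.degree ≤ (k : WithBot ℕ) →
      ipj x V j ψ - bdj x (trM x Q) j ψ + ipj x Q j (derivative ψ)
        = bdj x (trM x U) j ψ - ipj x U j (derivative ψ))
    (hφ : memV k φ) :
    ∑ j, ipj x V j (φ j) = Lm x Q φ + Lm x U φ := by
  simp only [Lm, ← sum_add_distrib]
  exact sum_congr rfl fun j _ => by linarith [h j (φ j) (hφ j)]

lemma sum_ipj_eq_Lp {k : ℕ} {V Q φ : Fin N → ℝ[X]}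
    (h : ∀ j, ∀ ψ : ℝ[X], ψ.degree ≤ (k : WithBot ℕ) →
      ipj x Q j ψ = bdj x (trP x V) j ψ - ipj x V j (derivative ψ))
    (hφ : memV k φ) :
    ∑ j, ipj x Q j (φ j) = Lp x V φ := by
  simp only [Lp]
  exact sum_congr rfl fun j _ => by linarith [h j (φ j) (hφ j)]

lemma sum_ipj_add_Nd_add_sum_ipj {k : ℕ} {f : ℝ → ℝ} {U U' V φ : Fin N → ℝ[X]}
    (h : ∀ j, ∀ ψ : ℝ[X], ψ.degree ≤ (k : WithBot ℕ) →
      ipj x U' j ψ + bdj x (fun i => godunov f (trM x U i) (trP x U i)) j ψ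
        - ipfj x f U j (derivative ψ) + ipj x V j ψ = 0)
    (hφ : memV k φ) :
    ∑ j, ipj x U' j (φ j) + Nd x f U φ + ∑ j, ipj x V j (φ j) = 0 := by
  simp only [Nd, ← sum_add_distrib]
  exact sum_eq_zero fun j _ => by linarith [h j (φ j) (hφ j)]

omit [NeZero N] in
lemma memV_one {k : ℕ} : memV k (fun _ : Fin N => (1 : ℝ[X])) :=
  fun _ => degree_one_le.trans (WithBot.coe_le_coe.mpr k.zero_le)

end Forms

end FW

theorem stmt9_general {N : ℕ} [NeZero N]
    (x : Fin (N + 1) → ℝ)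
    (k : ℕ) (p : ℕ) (T : ℝ)
    (u u' v q : ℝ → Fin N → Polynomial ℝ)
    (hdeg : ∀ t ∈ Set.Icc (0:ℝ) T,
      FW.memV k (u t) ∧ FW.memV k (u' t) ∧ FW.memV k (v t) ∧ FW.memV k (q t))
    (hder : ∀ t ∈ Set.Icc (0:ℝ) T, ∀ (j : Fin N) (m : ℕ),
      HasDerivWithinAt (fun σ => (u σ j).coeff m) ((u' t j).coeff m) (Set.Icc (0:ℝ) T) t)
    (heq1 : ∀ t ∈ Set.Icc (0:ℝ) T, ∀ (j : Fin N), ∀ φ : Polynomial ℝ,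
      φ.degree ≤ (k : WithBot ℕ) →
      FW.ipj x (u' t) j φ
        + FW.bdj x (fun i => FW.godunov (fun w => w ^ p / (p : ℝ))
            (FW.trM x (u t) i) (FW.trP x (u t) i)) j φ
        - FW.ipfj x (fun w => w ^ p / (p : ℝ)) (u t) j (Polynomial.derivative φ)
        + FW.ipj x (v t) j φ = 0)
    (heq2 : ∀ t ∈ Set.Icc (0:ℝ) T, ∀ (j : Fin N), ∀ φ : Polynomial ℝ,
      φ.degree ≤ (k : WithBot ℕ) →
      FW.ipj x (v t) j φ - FW.bdj x (FW.trM x (q t)) j φ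
          + FW.ipj x (q t) j (Polynomial.derivative φ)
        = FW.bdj x (FW.trM x (u t)) j φ - FW.ipj x (u t) j (Polynomial.derivative φ))
    (heq3 : ∀ t ∈ Set.Icc (0:ℝ) T, ∀ (j : Fin N), ∀ φ : Polynomial ℝ,
      φ.degree ≤ (k : WithBot ℕ) →
      FW.ipj x (q t) j φ
        = FW.bdj x (FW.trP x (v t)) j φ - FW.ipj x (v t) j (Polynomial.derivative φ)) :
    (∀ t ∈ Set.Icc (0:ℝ) T,
      HasDerivWithinAt (fun σ => ∑ j : Fin N, ∫ y in (x j.castSucc)..(x j.succ), (u σ j).eval y) 0 (Set.Icc (0:ℝ) T) t)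
    ∧ (∀ t ∈ Set.Icc (0:ℝ) T, ∃ e ≤ (0:ℝ),
      HasDerivWithinAt (fun σ => ∑ j : Fin N, ∫ y in (x j.castSucc)..(x j.succ), ((u σ j).eval y) ^ 2) e (Set.Icc (0:ℝ) T) t) := by
  have hf : Continuous fun w : ℝ => w ^ p / (p : ℝ) := by fun_prop
  have hnat : ∀ t ∈ Set.Icc (0:ℝ) T, ∀ j,
      (u t j).natDegree ≤ k ∧ (u' t j).natDegree ≤ k :=
    fun t ht j => ⟨natDegree_le_iff_degree_le.mpr ((hdeg t ht).1 j),
      natDegree_le_iff_degree_le.mpr ((hdeg t ht).2.1 j)⟩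
  have mass : ∀ t ∈ Set.Icc (0:ℝ) T, ∑ j, FW.ipj x (u' t) j 1 = 0 := by
    intro t ht
    have h := FW.sum_ipj_add_Nd_add_sum_ipj x (heq1 t ht) FW.memV_one
    rw [FW.Nd_one, FW.sum_ipj_eq_Lm_add_Lm x (heq2 t ht) FW.memV_one, FW.Lm_one, FW.Lm_one] at h
    linarith
  have energy : ∀ t ∈ Set.Icc (0:ℝ) T, ∑ j, FW.ipj x (u' t) j (u t j) ≤ 0 := by
    intro t ht
    obtain ⟨hu, -, hv, hq⟩ := hdeg t ht
    linarith [FW.sum_ipj_add_Nd_add_sum_ipj x (heq1 t ht) hu, FW.Nd_self_nonneg x hf (u t),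
      FW.sum_ipj_nonneg_of_ldg x hu hv hq (fun _ => FW.sum_ipj_eq_Lm_add_Lm x (heq2 t ht))
        (fun _ => FW.sum_ipj_eq_Lp x (heq3 t ht))]
  refine ⟨fun t ht => ?_, fun t ht =>
    ⟨2 * ∑ j, FW.ipj x (u' t) j (u t j), by linarith [energy t ht], ?_⟩⟩
  · have h := HasDerivWithinAt.fun_sum fun j (_ : j ∈ Finset.univ) =>
      hasDerivWithinAt_intervalIntegral_eval (fun σ hσ => (hnat σ hσ j).1) (hnat t ht j).2
        (hder t ht j) ht (x j.castSucc) (x j.succ)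
    have hmass := mass t ht
    simp only [FW.ipj, eval_one, mul_one] at hmass
    rwa [hmass] at h
  · simp only [FW.ipj, Finset.mul_sum]
    exact HasDerivWithinAt.fun_sum fun j _ =>
      hasDerivWithinAt_intervalIntegral_eval_sq (fun σ hσ => (hnat σ hσ j).1) (hnat t ht j).2
        (hder t ht j) ht (x j.castSucc) (x j.succ)

theorem stmt9 {N : ℕ} [NeZero N] (hN : 1 ≤ N) (a b : ℝ) (hab : a < b)
    (x : Fin (N + 1) → ℝ) (hx : StrictMono x) (hxa : x 0 = a) (hxb : x (Fin.last N) = b)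
    (k : ℕ) (p : ℕ) (hp : 2 ≤ p) (T : ℝ) (hT : 0 < T)
    (u u' v q : ℝ → Fin N → Polynomial ℝ)
    (hdeg : ∀ t ∈ Set.Icc (0:ℝ) T,
      FW.memV k (u t) ∧ FW.memV k (u' t) ∧ FW.memV k (v t) ∧ FW.memV k (q t))
    (hder : ∀ t ∈ Set.Icc (0:ℝ) T, ∀ (j : Fin N) (m : ℕ),
      HasDerivWithinAt (fun σ => (u σ j).coeff m) ((u' t j).coeff m) (Set.Icc (0:ℝ) T) t)
    (heq1 : ∀ t ∈ Set.Icc (0:ℝ) T, ∀ (j : Fin N), ∀ φ : Polynomial ℝ,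
      φ.degree ≤ (k : WithBot ℕ) →
      FW.ipj x (u' t) j φ
        + FW.bdj x (fun i => FW.godunov (fun w => w ^ p / (p : ℝ))
            (FW.trM x (u t) i) (FW.trP x (u t) i)) j φ
        - FW.ipfj x (fun w => w ^ p / (p : ℝ)) (u t) j (Polynomial.derivative φ)
        + FW.ipj x (v t) j φ = 0)
    (heq2 : ∀ t ∈ Set.Icc (0:ℝ) T, ∀ (j : Fin N), ∀ φ : Polynomial ℝ,
      φ.degree ≤ (k : WithBot ℕ) →
      FW.ipj x (v t) j φ - FW.bdj x (FW.trM x (q t)) j φ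
          + FW.ipj x (q t) j (Polynomial.derivative φ)
        = FW.bdj x (FW.trM x (u t)) j φ - FW.ipj x (u t) j (Polynomial.derivative φ))
    (heq3 : ∀ t ∈ Set.Icc (0:ℝ) T, ∀ (j : Fin N), ∀ φ : Polynomial ℝ,
      φ.degree ≤ (k : WithBot ℕ) →
      FW.ipj x (q t) j φ
        = FW.bdj x (FW.trP x (v t)) j φ - FW.ipj x (v t) j (Polynomial.derivative φ)) :
    (∀ t ∈ Set.Icc (0:ℝ) T,
      HasDerivWithinAt (fun σ => ∑ j : Fin N, ∫ y in (x j.castSucc)..(x j.succ), (u σ j).eval y) 0 (Set.Icc (0:ℝ) T) t)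
    ∧ (∀ t ∈ Set.Icc (0:ℝ) T, ∃ e ≤ (0:ℝ),
      HasDerivWithinAt (fun σ => ∑ j : Fin N, ∫ y in (x j.castSucc)..(x j.succ), ((u σ j).eval y) ^ 2) e (Set.Icc (0:ℝ) T) t) :=
  stmt9_general x k p T u u' v q hdeg hder heq1 heq2 heq3
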